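/- If a global type G is deadlock-free realisable in the synchronous communication model synch, then dual(prod(proj(G))) is a complement of G, i.e. L∃(G) = MSC(synch) \ L∃(dual(prod(proj(G)))). -/

import Mathlib

/-! ## Common definitions: actions, executions, MSCs, communication models,
communicating finite state machines, and global types. -/

/-- Actions: a send `p▷q!m` or a receive `p▷q?m`. -/
inductive Act (P M : Type) : Type where
  | snd (p q : P) (m : M)
  | rcv (p q : P) (m : M)
deriving DecidableEq

namespace Act
variable {P M : Type}

/-- The process executing an action: a send belongs to the sender,
a receive belongs to the receiver. -/
def proc : Act P M → P
  | .snd p _ _ => p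
  | .rcv _ q _ => q

end Act

/-- Raw executions: a word of actions together with a source function on positions. -/
structure Exec (P M : Type) : Type where
  w : List (Act P M)
  src : ℕ → ℕ

namespace Exec
variable {P M : Type}

def act? (e : Exec P M) (i : ℕ) : Option (Act P M) := e.w[i]?

def IsSend (e : Exec P M) (i : ℕ) : Prop := ∃ p q m, e.act? i = some (.snd p q m)

def IsRecv (e : Exec P M) (i : ℕ) : Prop := ∃ p q m, e.act? i = some (.rcv p q m)

/-- Well-formedness of an execution: each receive event `r` labelled `p▷q?m` has a
source send event `src r < r` labelled `p▷q!m`, and `src` is injective on receive events. -/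
def WF (e : Exec P M) : Prop :=
  (∀ i p q m, e.act? i = some (.rcv p q m) →
    e.src i < i ∧ e.act? (e.src i) = some (.snd p q m)) ∧
  (∀ i j, e.IsRecv i → e.IsRecv j → e.src i = e.src j → i = j)

/-- A send event is matched if it is the source of some receive event. -/
def Matched (e : Exec P M) (s : ℕ) : Prop := ∃ r, e.IsRecv r ∧ e.src r = s

def OrphanFree (e : Exec P M) : Prop := ∀ s, e.IsSend s → e.Matched s

/-- Prefix of executions: the word is a prefix and the source functions agree
on the receive events of the shorter one. -/
def IsPrefix (e₁ e₂ : Exec P M) : Prop :=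
  e₁.w <+: e₂.w ∧ ∀ i, e₁.IsRecv i → e₁.src i = e₂.src i

/-- Projection of an execution onto the actions of a process. -/
def proj (e : Exec P M) [DecidableEq P] (p : P) : List (Act P M) :=
  e.w.filter (fun a => decide (a.proc = p))

/-- The MSC event `(process, index within the process)` at a position of the word. -/
def evOf (e : Exec P M) [DecidableEq P] (i : ℕ) : Option (P × ℕ) :=
  (e.act? i).map
    (fun a => (a.proc, ((e.w.take i).filter (fun b => decide (b.proc = a.proc))).length))

/-- The position in the word of the `i`-th event of process `p`. -/
def posOf (e : Exec P M) [DecidableEq P] (ev : P × ℕ) : ℕ :=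
  ((List.range e.w.length).filter
    (fun k => decide ((e.act? k).map Act.proc = some ev.1))).getD ev.2 0

end Exec

/-- Raw MSCs: a word of actions per process, and a source function on events. -/
structure MSC (P M : Type) : Type where
  w : P → List (Act P M)
  src : P × ℕ → P × ℕ

namespace MSC
variable {P M : Type}

def act? (Mm : MSC P M) (ev : P × ℕ) : Option (Act P M) := (Mm.w ev.1)[ev.2]?

def IsSend (Mm : MSC P M) (ev : P × ℕ) : Prop := ∃ p q m, Mm.act? ev = some (.snd p q m)

def IsRecv (Mm : MSC P M) (ev : P × ℕ) : Prop := ∃ p q m, Mm.act? ev = some (.rcv p q m)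

/-- Well-formedness of an MSC. -/
def WF (Mm : MSC P M) : Prop :=
  (∀ p, ∀ a ∈ Mm.w p, a.proc = p) ∧
  (∀ ev p q m, Mm.act? ev = some (.rcv p q m) → Mm.act? (Mm.src ev) = some (.snd p q m)) ∧
  (∀ ev ev', Mm.IsRecv ev → Mm.IsRecv ev' → Mm.src ev = Mm.src ev' → ev = ev')

/-- Basic happens-before steps: process order and message order. -/
inductive hbBase (Mm : MSC P M) : P × ℕ → P × ℕ → Prop where
  | proc (p : P) (i j : ℕ) : i < j → j < (Mm.w p).length → hbBase Mm (p, i) (p, j)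
  | msg (ev : P × ℕ) : Mm.IsRecv ev → hbBase Mm (Mm.src ev) ev

/-- The happens-before relation: least transitive relation containing the basic steps. -/
def hb (Mm : MSC P M) : P × ℕ → P × ℕ → Prop := Relation.TransGen (hbBase Mm)

/-- Prefix of MSCs. -/
def IsPrefix (M₁ M₂ : MSC P M) : Prop :=
  (∀ p, M₁.w p <+: M₂.w p) ∧ ∀ ev, M₁.IsRecv ev → M₁.src ev = M₂.src ev

end MSC

/-- Prefix closure of a set of MSCs. -/
def prefSet {P M : Type} (X : Set (MSC P M)) : Set (MSC P M) :=
  {Mm | ∃ M' ∈ X, Mm.IsPrefix M'}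

/-- The MSC of an execution: project onto each process and lift the source function. -/
def Exec.toMSC {P M : Type} [DecidableEq P] (e : Exec P M) : MSC P M where
  w p := e.w.filter (fun a => decide (a.proc = p))
  src ev := (e.evOf (e.src (e.posOf ev))).getD ev

/-- The linearisations of an MSC, identified with the executions they induce. -/
def lin {P M : Type} [DecidableEq P] (Mm : MSC P M) : Set (Exec P M) :=
  {e | e.WF ∧ e.toMSC = Mm}

/-- The linearisations of an MSC lying in a communication model. -/
def linC {P M : Type} [DecidableEq P] (Com : Set (Exec P M)) (Mm : MSC P M) :
    Set (Exec P M) :=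
  lin Mm ∩ Com

/-- A communication model (a set of executions) is causally closed if whenever an MSC
has a linearisation in the model, all its linearisations are in the model. -/
def CausallyClosed {P M : Type} [DecidableEq P] (Com : Set (Exec P M)) : Prop :=
  ∀ Mm : MSC P M, (linC Com Mm).Nonempty → linC Com Mm = lin Mm

/-- The MSCs linearisable in a communication model. -/
def MSCModel {P M : Type} [DecidableEq P] (Com : Set (Exec P M)) : Set (MSC P M) :=
  {Mm | (linC Com Mm).Nonempty}

/-- The bag communication model: all executions. -/
def bag {P M : Type} : Set (Exec P M) := {e | e.WF}

/-- The synchronous communication model: every send is immediately followed by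
its matching receive. -/
def synch {P M : Type} : Set (Exec P M) :=
  {e | e.WF ∧ ∀ s, e.IsSend s → e.IsRecv (s + 1) ∧ e.src (s + 1) = s}

/-- The peer-to-peer communication model. -/
def p2p {P M : Type} : Set (Exec P M) :=
  {e | e.WF ∧ ∀ s₁ s₂ p q m₁ m₂,
    e.act? s₁ = some (.snd p q m₁) → e.act? s₂ = some (.snd p q m₂) → s₁ < s₂ →
    (¬ e.Matched s₂ ∨
      ∃ r₁ r₂, r₁ < r₂ ∧ e.IsRecv r₁ ∧ e.IsRecv r₂ ∧ e.src r₁ = s₁ ∧ e.src r₂ = s₂)}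

/-- Happens-before between positions of an execution, through its MSC. -/
def Exec.hbM {P M : Type} [DecidableEq P] (e : Exec P M) (i j : ℕ) : Prop :=
  ∃ ev₁ ev₂, e.evOf i = some ev₁ ∧ e.evOf j = some ev₂ ∧ e.toMSC.hb ev₁ ev₂

/-- The causally ordered communication model. -/
def causal {P M : Type} [DecidableEq P] : Set (Exec P M) :=
  {e | e.WF ∧ ∀ s₁ s₂ p₁ p₂ q m₁ m₂,
    e.act? s₁ = some (.snd p₁ q m₁) → e.act? s₂ = some (.snd p₂ q m₂) → e.hbM s₁ s₂ →
    (¬ e.Matched s₂ ∨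
      ∃ r₁ r₂, e.hbM r₁ r₂ ∧ e.IsRecv r₁ ∧ e.IsRecv r₂ ∧ e.src r₁ = s₁ ∧ e.src r₂ = s₂)}

/-- A communicating finite state machine: an NFA with ε-transitions
(over the actions of a process) with finitely many states. -/
structure CFSM (A : Type) : Type 1 where
  State : Type
  fin : Fintype State
  aut : εNFA A State

instance {A : Type} (c : CFSM A) : Fintype c.State := c.fin

/-- The machine obtained by making all states accepting. -/
def CFSM.up {A : Type} (c : CFSM A) : CFSM A :=
  ⟨c.State, c.fin, { c.aut with accept := Set.univ }⟩

/-- Making all states of all machines of a system accepting. -/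
def sysUp {P M : Type} (S : P → CFSM (Act P M)) : P → CFSM (Act P M) :=
  fun p => (S p).up

/-- `Exec(S, Com)`: the executions of a system of CFSMs in a communication model. -/
def ExecSys {P M : Type} [DecidableEq P] (S : P → CFSM (Act P M)) (Com : Set (Exec P M)) :
    Set (Exec P M) :=
  {e | e ∈ Com ∧ ∀ p, e.proj p ∈ (S p).aut.accepts}

/-- `MSC(S, Com)`: the MSCs of the executions of a system of CFSMs. -/
def MSCSys {P M : Type} [DecidableEq P] (S : P → CFSM (Act P M)) (Com : Set (Exec P M)) :
    Set (MSC P M) :=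
  Exec.toMSC '' ExecSys S Com

/-- A system is deadlock-free for `Com` if every execution of the system with all states
accepting is a prefix of an accepting execution of the system. -/
def DeadlockFree {P M : Type} [DecidableEq P] (S : P → CFSM (Act P M))
    (Com : Set (Exec P M)) : Prop :=
  ∀ e ∈ ExecSys (sysUp S) Com, ∃ e' ∈ ExecSys S Com, e.IsPrefix e'

/-- A system is orphan-free for `Com` if all its executions are orphan-free. -/
def SysOrphanFree {P M : Type} [DecidableEq P] (S : P → CFSM (Act P M))
    (Com : Set (Exec P M)) : Prop :=
  ∀ e ∈ ExecSys S Com, e.OrphanFree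

/-- An arrow `p→q:m` with `p ≠ q`. -/
def Arrow (P M : Type) : Type := {x : P × P × M // x.1 ≠ x.2.1}

namespace Arrow
variable {P M : Type}

def sender (a : Arrow P M) : P := a.1.1
def receiver (a : Arrow P M) : P := a.1.2.1
def msg (a : Arrow P M) : M := a.1.2.2
def sendAct (a : Arrow P M) : Act P M := .snd a.sender a.receiver a.msg
def recvAct (a : Arrow P M) : Act P M := .rcv a.sender a.receiver a.msg

/-- Two arrows commute when their pairs of processes are disjoint. -/
def Commutes (a b : Arrow P M) : Prop :=
  a.sender ≠ b.sender ∧ a.sender ≠ b.receiver ∧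
    a.receiver ≠ b.sender ∧ a.receiver ≠ b.receiver

instance [DecidableEq P] [Fintype P] [Fintype M] : Fintype (Arrow P M) :=
  Subtype.fintype _

end Arrow

/-- A global type: a deterministic finite (possibly partial) automaton over arrows. -/
structure GType (P M : Type) : Type 1 where
  State : Type
  fin : Fintype State
  step : State → Arrow P M → Option State
  start : State
  accept : Set State

instance {P M : Type} (G : GType P M) : Fintype G.State := G.fin

namespace GType
variable {P M : Type}

def evalFrom (G : GType P M) (s : Option G.State) (w : List (Arrow P M)) : Option G.State :=
  w.foldl (fun s a => s.bind (fun q => G.step q a)) s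

/-- The word language of a global type. -/
def lang (G : GType P M) : Set (List (Arrow P M)) :=
  {w | ∃ s, G.evalFrom (some G.start) w = some s ∧ s ∈ G.accept}

/-- The arrows labelling the outgoing transitions of a state. -/
def choices (G : GType P M) (s : G.State) : Set (Arrow P M) := {a | (G.step s a).isSome}

/-- Commutation-determinism: no two arrows available at a same state commute. -/
def CommDet (G : GType P M) : Prop :=
  ∀ s : G.State, ∀ a ∈ G.choices s, ∀ b ∈ G.choices s, ¬ a.Commutes b

/-- Sender-driven choice: all arrows available at a same state have the same sender. -/
def SenderDriven (G : GType P M) : Prop :=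
  ∀ s : G.State, ∀ a ∈ G.choices s, ∀ b ∈ G.choices s, a.sender = b.sender

end GType

/-- The synchronous execution coded by a sequence of arrows. -/
def execOfArrows {P M : Type} (w : List (Arrow P M)) : Exec P M where
  w := (w.map (fun a => [a.sendAct, a.recvAct])).flatten
  src := fun i => i - 1

/-- The MSC coded by a sequence of arrows. -/
def mscOfArrows {P M : Type} [DecidableEq P] (w : List (Arrow P M)) : MSC P M :=
  (execOfArrows w).toMSC

/-- The set of MSCs of sequences of arrows (MSCs linearisable in the synchronous model). -/
def MSCsynch (P M : Type) [DecidableEq P] : Set (MSC P M) :=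
  Set.range (mscOfArrows (P := P) (M := M))

/-- The existential MSC language of a global type. -/
def Lexists {P M : Type} [DecidableEq P] (G : GType P M) : Set (MSC P M) :=
  mscOfArrows '' G.lang

/-- The universal MSC language of a global type. -/
def Lforall {P M : Type} [DecidableEq P] (G : GType P M) : Set (MSC P M) :=
  {Mm | (∃ w, mscOfArrows w = Mm) ∧ ∀ w, mscOfArrows w = Mm → w ∈ G.lang}

/-- A global type is commutation-closed when its existential and universal MSC
languages coincide. -/
def GType.CommClosed {P M : Type} [DecidableEq P] (G : GType P M) : Prop :=
  Lexists G = Lforall G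

/-- The relabelling of an arrow for the projection onto process `p`. -/
def projLabel {P M : Type} [DecidableEq P] (p : P) (a : Arrow P M) : Option (Act P M) :=
  if a.sender = p then some a.sendAct
  else if a.receiver = p then some a.recvAct
  else none

/-- The projected system of CFSMs of a global type. -/
def projG {P M : Type} [DecidableEq P] (G : GType P M) : P → CFSM (Act P M) :=
  fun p =>
    ⟨G.State, G.fin,
      { step := fun s oa =>
          {s' | ∃ arr : Arrow P M, G.step s arr = some s' ∧ projLabel p arr = oa},
        start := {G.start},
        accept := G.accept }⟩

/-- `Exec(G, Com)`: the semantics of a global type in a communication model. -/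
def ExecG {P M : Type} [DecidableEq P] (G : GType P M) (Com : Set (Exec P M)) :
    Set (Exec P M) :=
  {e | ∃ Mm ∈ Lexists G, e ∈ linC Com Mm}

/-- Deadlock-free realisability of a global type in a communication model:
(CC) conformance and (DF) deadlock freedom of the projected system. -/
def DFRealisable {P M : Type} [DecidableEq P] (G : GType P M) (Com : Set (Exec P M)) : Prop :=
  ExecSys (projG G) Com = ExecG G Com ∧ DeadlockFree (projG G) Com

/-- The synchronous product of a system of CFSMs: an ε-NFA over arrows. -/
def syncProd {P M : Type} (S : P → CFSM (Act P M)) :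
    εNFA (Arrow P M) (∀ p, (S p).State) where
  step st oa :=
    match oa with
    | some a =>
        {st' | st' a.sender ∈ (S a.sender).aut.step (st a.sender) (some a.sendAct) ∧
               st' a.receiver ∈ (S a.receiver).aut.step (st a.receiver) (some a.recvAct) ∧
               ∀ r, r ≠ a.sender → r ≠ a.receiver → st' r = st r}
    | none =>
        {st' | ∃ p, st' p ∈ (S p).aut.step (st p) none ∧ ∀ r, r ≠ p → st' r = st r}
  start := {st | ∀ p, st p ∈ (S p).aut.start}
  accept := {st | ∀ p, st p ∈ (S p).aut.accept}

/-- `prod(S)`: the powerset determinisation of the synchronous product, a global type. -/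
noncomputable def prodG {P M : Type} [Fintype P] (S : P → CFSM (Act P M)) : GType P M :=
  let A := (syncProd S).toNFA.toDFA
  { State := Set (∀ p, (S p).State)
    fin := by
      haveI : Finite (∀ p, (S p).State) := inferInstance
      exact Fintype.ofFinite _
    step := fun s a => some (A.step s a)
    start := A.start
    accept := A.accept }

/-- The product `G₁ ⊗ G₂` of two global types (language intersection). -/
def prodGT {P M : Type} (G₁ G₂ : GType P M) : GType P M where
  State := G₁.State × G₂.State
  fin := inferInstance
  step s a := (G₁.step s.1 a).bind fun q₁ => (G₂.step s.2 a).map fun q₂ => (q₁, q₂)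
  start := (G₁.start, G₂.start)
  accept := {s | s.1 ∈ G₁.accept ∧ s.2 ∈ G₂.accept}

/-- The dual of a global type: complete it and swap accepting and non-accepting states. -/
def dualG {P M : Type} (G : GType P M) : GType P M where
  State := Option G.State
  fin := inferInstance
  step s a := some (s.bind fun q => G.step q a)
  start := some G.start
  accept := {s | ∀ q, s = some q → q ∉ G.accept}

/-- RSC executions: every receive immediately follows its source send. -/
def RSCexec {P M : Type} : Set (Exec P M) :=
  {e | e.WF ∧ ∀ r, e.IsRecv r → e.src r = r - 1}

/-- The MSCs admitting an RSC linearisation. -/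
def MSCrsc {P M : Type} [DecidableEq P] : Set (MSC P M) :=
  {Mm | ∃ e ∈ RSCexec (P := P) (M := M), e.toMSC = Mm}

/-- A set of MSCs is RegSC if some NFA over actions accepts exactly the RSC executions
whose MSC belongs to the set. -/
def RegSCset {P M : Type} [DecidableEq P] (X : Set (MSC P M)) : Prop :=
  ∃ (σ : Type) (_ : Fintype σ) (A : NFA (Act P M) σ),
    ∀ w : List (Act P M),
      w ∈ A.accepts ↔ ∃ e ∈ RSCexec (P := P) (M := M), e.w = w ∧ e.toMSC ∈ X

/-- A communication model is RegSC if the set of its RSC-linearisable MSCs is RegSC. -/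
def RegSCmodel {P M : Type} [DecidableEq P] (Com : Set (Exec P M)) : Prop :=
  RegSCset (MSCModel Com ∩ MSCrsc)

/-! In the synchronous model a word of arrows `w` is read as the execution `execOfArrows w`,
and the synchronous product of a system accepts `w` exactly when every machine accepts the
projection of `w`, i.e. when `execOfArrows w` is a synchronous execution of the system. For the
projected system, conformance (CC) turns this into `msc(w) ∈ L∃(G)`, so `prod(proj(G))` accepts
precisely the words whose MSC lies in `L∃(G)`. Its dual accepts the other words, and removing
their MSCs from `MSC(synch)` leaves exactly `L∃(G)`. -/

namespace εNFA

variable {α σ : Type*} (M : εNFA α σ)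

theorem εClosure_idem (X : Set σ) : M.εClosure (M.εClosure X) = M.εClosure X := by
  refine subset_antisymm (fun s hs => ?_) (subset_εClosure _ _)
  induction hs with
  | base s hs => exact hs
  | step s t ht _ ih => exact εClosure.step s t ht ih

theorem stepSet_eq_εClosure (X : Set σ) (a : α) :
    M.stepSet X a = M.εClosure (⋃ s ∈ X, M.step s (some a)) := by
  ext t
  simp only [mem_stepSet_iff, M.mem_εClosure_iff_exists (S := ⋃ s ∈ X, _), Set.mem_iUnion₂]
  simp_rw [M.mem_εClosure_iff_exists (S := M.step _ _)]
  tauto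

theorem εClosure_stepSet (X : Set σ) (a : α) :
    M.εClosure (M.stepSet X a) = M.stepSet X a := by
  rw [stepSet_eq_εClosure, εClosure_idem]

end εNFA

section Arrows

variable {P M : Type}

theorem execOfArrows_cons (a : Arrow P M) (w : List (Arrow P M)) :
    (execOfArrows (a :: w)).w = a.sendAct :: a.recvAct :: (execOfArrows w).w := by
  simp [execOfArrows]

theorem execOfArrows_act? (w : List (Arrow P M)) (i : ℕ) :
    (execOfArrows w).act? i =
      w[i / 2]?.map fun a => if i % 2 = 0 then a.sendAct else a.recvAct := by
  induction w generalizing i with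
  | nil => simp [execOfArrows, Exec.act?]
  | cons a w ih =>
    rcases i with _ | _ | i
    · simp [Exec.act?, execOfArrows_cons]
    · simp [Exec.act?, execOfArrows_cons]
    · have hmod : (i + 2) % 2 = i % 2 := Nat.add_mod_right i 2
      have hdiv : (i + 2) / 2 = i / 2 + 1 := Nat.add_div_right i two_pos
      have := ih i
      simp only [Exec.act?] at this
      simp only [Exec.act?, execOfArrows_cons, List.getElem?_cons_succ, this, hmod, hdiv]

theorem execOfArrows_act?_eq_rcv {w : List (Arrow P M)} {i : ℕ} {p q : P} {m : M}
    (h : (execOfArrows w).act? i = some (.rcv p q m)) :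
    i % 2 = 1 ∧ (execOfArrows w).act? (i - 1) = some (.snd p q m) := by
  rw [execOfArrows_act?] at h ⊢
  obtain ⟨a, ha, hact⟩ := Option.map_eq_some_iff.1 h
  split_ifs at hact with hi
  · simp [Arrow.sendAct] at hact
  · obtain ⟨hdiv, hmod⟩ : (i - 1) / 2 = i / 2 ∧ (i - 1) % 2 = 0 := by omega
    simp only [Arrow.recvAct, Act.rcv.injEq] at hact
    exact ⟨by omega, by simp [hdiv, hmod, ha, Arrow.sendAct, hact]⟩

theorem execOfArrows_act?_eq_snd {w : List (Arrow P M)} {s : ℕ} {p q : P} {m : M}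
    (h : (execOfArrows w).act? s = some (.snd p q m)) :
    (execOfArrows w).act? (s + 1) = some (.rcv p q m) := by
  rw [execOfArrows_act?] at h ⊢
  obtain ⟨a, ha, hact⟩ := Option.map_eq_some_iff.1 h
  split_ifs at hact with hs
  · obtain ⟨hdiv, hmod⟩ : (s + 1) / 2 = s / 2 ∧ (s + 1) % 2 = 1 := by omega
    simp only [Arrow.sendAct, Act.snd.injEq] at hact
    simp [hdiv, hmod, ha, Arrow.recvAct, hact]
  · simp [Arrow.recvAct] at hact

theorem execOfArrows_mem_synch (w : List (Arrow P M)) : execOfArrows w ∈ synch := by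
  refine ⟨⟨fun i p q m h => ?_, fun i j ⟨_, _, _, hi⟩ ⟨_, _, _, hj⟩ hij => ?_⟩,
    fun s ⟨p, q, m, hs⟩ => ⟨⟨p, q, m, execOfArrows_act?_eq_snd hs⟩, Nat.add_sub_cancel_right s 1⟩⟩
  · obtain ⟨hi_odd, hsnd⟩ := execOfArrows_act?_eq_rcv h
    exact ⟨Nat.sub_lt (by omega) one_pos, hsnd⟩
  · have hi_odd := (execOfArrows_act?_eq_rcv hi).1
    have hj_odd := (execOfArrows_act?_eq_rcv hj).1
    change i - 1 = j - 1 at hij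
    omega

theorem proj_execOfArrows [DecidableEq P] (w : List (Arrow P M)) (p : P) :
    (execOfArrows w).proj p = w.filterMap (projLabel p) := by
  induction w with
  | nil => rfl
  | cons a w ih =>
    have hne : a.sender ≠ a.receiver := a.2
    have hsnd : a.sendAct.proc = a.sender := rfl
    have hrcv : a.recvAct.proc = a.receiver := rfl
    simp only [Exec.proj, execOfArrows_cons] at ih ⊢
    rw [List.filter_cons, List.filter_cons, hsnd, hrcv, List.filterMap_cons, ih]
    by_cases hs : a.sender = p
    · have hr : a.receiver ≠ p := fun h => hne (hs.trans h.symm)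
      simp [projLabel, hs, hr]
    · by_cases hr : a.receiver = p <;> simp [projLabel, hs, hr]

end Arrows

section SyncProd

open Set

variable {P M : Type} [DecidableEq P]

theorem projLabel_sender (a : Arrow P M) : projLabel a.sender a = some a.sendAct :=
  if_pos rfl

theorem projLabel_receiver (a : Arrow P M) : projLabel a.receiver a = some a.recvAct := by
  rw [projLabel, if_neg (show a.sender ≠ a.receiver from a.2), if_pos rfl]

theorem projLabel_eq_none {a : Arrow P M} {p : P} (hs : a.sender ≠ p) (hr : a.receiver ≠ p) :
    projLabel p a = none := by
  rw [projLabel, if_neg hs, if_neg hr]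

variable (S : P → CFSM (Act P M))

theorem syncProd_step_some (st : ∀ p, (S p).State) (a : Arrow P M) :
    (syncProd S).step st (some a) =
      univ.pi fun p => (projLabel p a).elim {st p} fun b => (S p).aut.step (st p) (some b) := by
  ext st'
  simp only [syncProd, mem_ofPred_eq, mem_univ_pi]
  constructor
  · rintro ⟨hs, hr, hother⟩ p
    by_cases hps : a.sender = p
    · subst hps; simpa [projLabel_sender] using hs
    by_cases hpr : a.receiver = p
    · subst hpr; simpa [projLabel_receiver] using hr
    · simpa [projLabel_eq_none hps hpr] using hother p (Ne.symm hps) (Ne.symm hpr)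
  · intro h
    refine ⟨by simpa [projLabel_sender] using h a.sender,
      by simpa [projLabel_receiver] using h a.receiver, fun r hs hr => ?_⟩
    simpa [projLabel_eq_none (Ne.symm hs) (Ne.symm hr)] using h r

theorem update_mem_syncProd_εClosure {X : Set (∀ p, (S p).State)} {st : ∀ p, (S p).State}
    (hst : st ∈ (syncProd S).εClosure X) {p : P} {t : (S p).State}
    (ht : t ∈ (S p).aut.εClosure {st p}) :
    Function.update st p t ∈ (syncProd S).εClosure X := by
  induction ht with
  | base t ht => rwa [mem_singleton_iff.1 ht, Function.update_eq_self]
  | step s t hst' _ ih =>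
    refine εNFA.εClosure.step _ _ ⟨p, by simpa using hst', fun r hr => ?_⟩ ih
    simp [Function.update_of_ne hr]

theorem syncProd_εClosure_pi [Fintype P] (T : ∀ p, Set (S p).State) :
    (syncProd S).εClosure (univ.pi T) = univ.pi fun p => (S p).aut.εClosure (T p) := by
  refine subset_antisymm (fun st hst => ?_) (fun st hst => ?_)
  · induction hst with
    | base st hst => exact fun p _ => εNFA.subset_εClosure _ _ (hst p trivial)
    | step s t hst' _ ih =>
      obtain ⟨q, hq, hother⟩ := hst'
      intro p _
      by_cases hpq : p = q
      · subst hpq; exact εNFA.εClosure.step _ _ hq (ih p trivial)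
      · rw [hother p hpq]; exact ih p trivial
  · -- An ε-move of the product moves a single process, so the processes are moved one at a time.
    suffices H : ∀ F : Finset P, ∀ st ∈ univ.pi fun p => (S p).aut.εClosure (T p),
        (∀ p ∉ F, st p ∈ T p) → st ∈ (syncProd S).εClosure (univ.pi T) from
      H Finset.univ st hst fun p hp => absurd (Finset.mem_univ p) hp
    intro F
    induction F using Finset.induction_on with
    | empty => exact fun st _ hT => εNFA.εClosure.base _ fun p _ => hT p (Finset.notMem_empty p)
    | insert q F hq ih =>
      intro st hst hT
      obtain ⟨x, hx, hqx⟩ := (S q).aut.mem_εClosure_iff_exists.1 (hst q trivial)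
      have hupd : Function.update st q x ∈ (syncProd S).εClosure (univ.pi T) := by
        refine ih _ (fun p _ => ?_) (fun p hp => ?_) <;> by_cases hpq : p = q
        · subst hpq; simpa using εNFA.subset_εClosure _ _ hx
        · simpa [Function.update_of_ne hpq] using hst p trivial
        · subst hpq; simpa using hx
        · simpa [Function.update_of_ne hpq] using hT p (by simp [hpq, hp])
      have := update_mem_syncProd_εClosure S hupd (t := st q) (by simpa using hqx)
      rwa [Function.update_idem, Function.update_eq_self] at this

theorem syncProd_stepSet_pi [Fintype P] (T : ∀ p, Set (S p).State)
    (hT : ∀ p, (S p).aut.εClosure (T p) = T p) (a : Arrow P M) :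
    (syncProd S).stepSet (univ.pi T) a =
      univ.pi fun p => (projLabel p a).elim (T p) ((S p).aut.stepSet (T p)) := by
  simp_rw [εNFA.stepSet_eq_εClosure, syncProd_step_some]
  rw [biUnion_univ_pi T (fun p x => (projLabel p a).elim {x} fun b => (S p).aut.step x (some b)),
    syncProd_εClosure_pi]
  congr! 2 with p
  cases projLabel p a <;> simp [hT, εNFA.stepSet_eq_εClosure]

theorem syncProd_foldl_stepSet_pi [Fintype P] (w : List (Arrow P M)) (T : ∀ p, Set (S p).State)
    (hT : ∀ p, (S p).aut.εClosure (T p) = T p) :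
    w.foldl (syncProd S).stepSet (univ.pi T) =
      univ.pi fun p => (w.filterMap (projLabel p)).foldl (S p).aut.stepSet (T p) := by
  induction w generalizing T with
  | nil => rfl
  | cons a w ih =>
    rw [List.foldl_cons, syncProd_stepSet_pi S T hT, ih]
    · congr! 2 with p
      rcases h : projLabel p a with _ | b <;> simp [h]
    · intro p
      cases projLabel p a <;> simp [hT, εNFA.εClosure_stepSet]

theorem mem_syncProd_accepts [Fintype P] (w : List (Arrow P M)) :
    w ∈ (syncProd S).accepts ↔ ∀ p, w.filterMap (projLabel p) ∈ (S p).aut.accepts := by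
  have hstart : (syncProd S).start = univ.pi fun p => (S p).aut.start := by ext; simp [syncProd]
  have haccept : (syncProd S).accept = univ.pi fun p => (S p).aut.accept := by
    ext; simp [syncProd]
  have heval : (syncProd S).eval w =
      univ.pi fun p => (S p).aut.eval (w.filterMap (projLabel p)) := by
    rw [εNFA.eval, εNFA.evalFrom, hstart, syncProd_εClosure_pi,
      syncProd_foldl_stepSet_pi S w _ fun p => εNFA.εClosure_idem _ _]
    rfl
  change (∃ st ∈ (syncProd S).accept, st ∈ (syncProd S).eval w) ↔ _
  simp only [heval, haccept, mem_univ_pi]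
  constructor
  · rintro ⟨st, hacc, hst⟩ p
    exact ⟨st p, hacc p, hst p⟩
  · intro h
    choose st hacc hst using h
    exact ⟨st, hacc, hst⟩

end SyncProd

namespace GType

variable {P M : Type}

theorem evalFrom_dualG (G : GType P M) (w : List (Arrow P M)) (s : Option G.State) :
    (dualG G).evalFrom (some s) w = some (G.evalFrom s w) := by
  induction w generalizing s with
  | nil => rfl
  | cons a w ih => exact ih _

theorem lang_dualG (G : GType P M) : (dualG G).lang = G.langᶜ := by
  ext w
  have hstart : (dualG G).start = some G.start := rfl
  simp only [lang, Set.mem_compl_iff, Set.mem_ofPred_eq, hstart, evalFrom_dualG]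
  constructor
  · rintro ⟨_, hs, hacc⟩ ⟨t, ht, htacc⟩
    exact hacc t (Option.some_inj.1 hs ▸ ht) htacc
  · exact fun h => ⟨_, rfl, fun t ht htacc => h ⟨t, ht, htacc⟩⟩

theorem evalFrom_prodG [Fintype P] (S : P → CFSM (Act P M)) (w : List (Arrow P M))
    (t : (prodG S).State) :
    (prodG S).evalFrom (some t) w = some ((syncProd S).toNFA.toDFA.evalFrom t w) := by
  induction w generalizing t with
  | nil => rfl
  | cons a w ih => exact ih _

theorem mem_lang_prodG [Fintype P] (S : P → CFSM (Act P M)) (w : List (Arrow P M)) :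
    w ∈ (prodG S).lang ↔ w ∈ (syncProd S).accepts := by
  rw [← εNFA.toNFA_correct, ← NFA.toDFA_correct, DFA.mem_accepts]
  simp only [lang, Set.mem_ofPred_eq, evalFrom_prodG]
  constructor
  · rintro ⟨_, hs, hacc⟩
    rwa [← Option.some_inj.1 hs] at hacc
  · exact fun h => ⟨_, rfl, h⟩

end GType

section Complement

open GType

variable {P M : Type}

theorem mem_lang_prodG_iff [Fintype P] [DecidableEq P] (S : P → CFSM (Act P M))
    (w : List (Arrow P M)) : w ∈ (prodG S).lang ↔ execOfArrows w ∈ ExecSys S synch := by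
  rw [mem_lang_prodG, mem_syncProd_accepts]
  simp only [ExecSys, Set.mem_ofPred_eq, proj_execOfArrows]
  exact ⟨fun h => ⟨execOfArrows_mem_synch w, h⟩, And.right⟩

theorem execOfArrows_mem_ExecG_iff [DecidableEq P] (G : GType P M) (w : List (Arrow P M)) :
    execOfArrows w ∈ ExecG G synch ↔ mscOfArrows w ∈ Lexists G :=
  ⟨fun ⟨_, hM, ⟨_, hmsc⟩, _⟩ => by rwa [mscOfArrows, hmsc],
    fun h => ⟨_, h, ⟨(execOfArrows_mem_synch w).1, rfl⟩, execOfArrows_mem_synch w⟩⟩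

theorem lang_prodG_projG [Fintype P] [DecidableEq P] (G : GType P M)
    (hCC : ExecSys (projG G) synch = ExecG G synch) :
    (prodG (projG G)).lang = mscOfArrows ⁻¹' Lexists G := by
  ext w
  rw [mem_lang_prodG_iff, hCC, execOfArrows_mem_ExecG_iff]
  rfl

theorem Lexists_dualG_of_lang_eq_preimage [DecidableEq P] {H : GType P M} {X : Set (MSC P M)}
    (hH : H.lang = mscOfArrows ⁻¹' X) : Lexists (dualG H) = Xᶜ ∩ MSCsynch P M := by
  rw [Lexists, lang_dualG, hH, ← Set.preimage_compl, Set.image_preimage_eq_inter_range]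
  rfl

end Complement

theorem stmt11_general (P Mg : Type) [Fintype P] [DecidableEq P]
    (G : GType P Mg) (h : DFRealisable G synch) :
    Lexists G = MSCsynch P Mg \ Lexists (dualG (prodG (projG G))) := by
  rw [Lexists_dualG_of_lang_eq_preimage (lang_prodG_projG G h.1), Set.sdiff_inter_self_eq_sdiff,
    Set.sdiff_compl]
  exact (Set.inter_eq_right.2 (Set.image_subset_range _ _)).symm

/-- if `G` is deadlock-free realisable in `synch`, then
`dual(prod(proj(G)))` is a complement of `G`. -/
theorem stmt11 (P Mg : Type) [Fintype P] [DecidableEq P] [Fintype Mg] [DecidableEq Mg]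
    (G : GType P Mg) (h : DFRealisable G synch) :
    Lexists G = MSCsynch P Mg \ Lexists (dualG (prodG (projG G))) :=
  stmt11_general P Mg G h
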